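/- Let f : X → Y → ℝ be a classifier on a metric space X with finite label set Y, and let x ∈ X. Let a be the class maximizing f(x)_· and b the class maximizing f(x)_· over Y \ {a}, with p_a = f(x)_a and p_b = f(x)_b. Suppose f is locally L-Lipschitz at x in each coordinate: for all x' with dist(x', x) ≤ δ and all y ∈ Y, |f(x')_y − f(x)_y| ≤ L · dist(x, x'). If δ ≤ (p_a − p_b)/(2L) and L > 0, then for every x' with dist(x', x) ≤ δ, the class a remains a maximizer of f(x')_·, i.e., f(x')_a ≥ f(x')_l for all l ∈ Y. -/
import Mathlib

theorem lsp_robustness_certificate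
    {X : Type*} [MetricSpace X] {Y : Type*} [Fintype Y]
    (f : X → Y → ℝ) (x : X) (a b : Y) (L δ : ℝ)
    (hab : a ≠ b)
    (ha : ∀ l : Y, f x l ≤ f x a)
    (hb : ∀ l : Y, l ≠ a → f x l ≤ f x b)
    (hL : 0 < L)
    (hLip : ∀ x' : X, dist x' x ≤ δ → ∀ y : Y, |f x' y - f x y| ≤ L * dist x x')
    (hδ : δ ≤ (f x a - f x b) / (2 * L)) :
    ∀ x' : X, dist x' x ≤ δ → ∀ l : Y, f x' l ≤ f x' a := by
  intro x' hd l
  by_cases hla : l = a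
  · subst hla; exact le_refl _
  · have h1 := hLip x' hd l
    have h2 := hLip x' hd a
    have hbl := hb l hla
    have hdist : dist x x' ≤ δ := by rwa [dist_comm]
    have hgap : δ * (2 * L) ≤ f x a - f x b :=
      (le_div_iff₀ (by positivity)).mp hδ
    have := abs_le.mp h1
    have := abs_le.mp h2
    nlinarith [dist_nonneg (x := x) (y := x')]
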